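/- arXiv:1801.06035 — 4 statements merged into one kernel-verified Lean document; each statement's English description precedes it below -/
import Mathlib

section
/- For every n ≥ 1, the quotient ring F₂[τ][u, v]/(u² + τ·v, vⁿ) is a free module over F₂[τ] of rank 2n, with basis given by the images of v^j and u·v^j for 0 ≤ j ≤ n−1. -/
open MvPolynomial

/-- `F₂[τ, u, v]`, with `τ = X 0`, `u = X 1`, `v = X 2`. -/
abbrev Poly7 := MvPolynomial (Fin 3) (ZMod 2)

/-- The ideal `(u² + τ·v, vⁿ)`. -/
noncomputable def relIdeal7 (n : ℕ) : Ideal Poly7 :=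
  Ideal.span {X 1 ^ 2 + X 0 * X 2, X 2 ^ n}

/-- `F₂[τ][u, v]/(u² + τ·v, vⁿ)` as an algebra over `F₂[τ]`, via `τ ↦ τ`. -/
noncomputable instance (n : ℕ) : Algebra (Polynomial (ZMod 2)) (Poly7 ⧸ relIdeal7 n) :=
  ((Ideal.Quotient.mkₐ (ZMod 2) (relIdeal7 n)).comp
    (Polynomial.aeval (X 0 : Poly7) : Polynomial (ZMod 2) →ₐ[ZMod 2] Poly7)).toRingHom.toAlgebra

/-!
Adjoining first a root `v` of `Xⁿ` to `F₂[τ]` and then a root `u` of `X² + τ·v` gives two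
extensions by monic polynomials, each free with a power basis; so the tower has the
`F₂[τ]`-basis `vʲ uⁱ` (`j < n`, `i < 2`). Both the tower and `F₂[τ][u, v]/(u² + τ·v, vⁿ)` are
presented by the generators `u, v` and these two relations, hence they are isomorphic as
`F₂[τ]`-algebras, and the basis transfers.
-/

noncomputable section

variable (R : Type*) [CommRing R] (n : ℕ)

abbrev TruncPoly := AdjoinRoot (Polynomial.X ^ n : Polynomial R)

def lensRelation (c : R) : Polynomial (TruncPoly R n) :=
  Polynomial.X ^ 2 + Polynomial.C (algebraMap R _ c * AdjoinRoot.root _)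

lemma lensRelation_monic (c : R) : (lensRelation R n c).Monic :=
  Polynomial.monic_X_pow_add_C _ two_ne_zero

/-- `R[v, u]/(vⁿ, u² + c·v)`. -/
abbrev LensRing (c : R) := AdjoinRoot (lensRelation R n c)

variable {R n}

lemma LensRing.root_sq_add (c : R) :
    AdjoinRoot.root (lensRelation R n c) ^ 2 +
      algebraMap R (LensRing R n c) c *
        algebraMap (TruncPoly R n) (LensRing R n c) (AdjoinRoot.root _) = 0 := by
  have h := AdjoinRoot.mk_self (f := lensRelation R n c)
  rw [lensRelation, map_add, map_pow, AdjoinRoot.mk_X, AdjoinRoot.mk_C] at h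
  rwa [IsScalarTower.algebraMap_apply R (TruncPoly R n) (LensRing R n c), ← map_mul]

lemma TruncPoly.root_pow : AdjoinRoot.root (Polynomial.X ^ n : Polynomial R) ^ n = 0 := by
  rw [← AdjoinRoot.mk_X, ← map_pow, AdjoinRoot.mk_self]

variable (R n) [Nontrivial R]

def TruncPoly.basis : Module.Basis (Fin n) R (TruncPoly R n) :=
  (AdjoinRoot.powerBasis' (Polynomial.monic_X_pow n)).basis.reindex
    (finCongr (Polynomial.natDegree_X_pow n))

lemma TruncPoly.basis_apply (j : Fin n) :
    TruncPoly.basis R n j = AdjoinRoot.root _ ^ (j : ℕ) := by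
  rw [TruncPoly.basis, Module.Basis.reindex_apply, PowerBasis.basis_eq_pow]
  rfl

lemma TruncPoly.nontrivial (hn : 0 < n) : Nontrivial (TruncPoly R n) :=
  nontrivial_of_ne _ _ ((TruncPoly.basis R n).ne_zero ⟨0, hn⟩)

variable {R n}

def LensRing.basisOverTrunc (hn : 0 < n) (c : R) :
    Module.Basis (Fin 2) (TruncPoly R n) (LensRing R n c) :=
  haveI := TruncPoly.nontrivial R n hn
  (AdjoinRoot.powerBasis' (lensRelation_monic R n c)).basis.reindex
    (finCongr Polynomial.natDegree_X_pow_add_C)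

def LensRing.basis (hn : 0 < n) (c : R) :
    Module.Basis (Fin n × Fin 2) R (LensRing R n c) :=
  (TruncPoly.basis R n).smulTower (LensRing.basisOverTrunc hn c)

lemma LensRing.basis_apply (hn : 0 < n) (c : R) (j : Fin n) (i : Fin 2) :
    LensRing.basis hn c (j, i) =
      algebraMap (TruncPoly R n) _ (AdjoinRoot.root _ ^ (j : ℕ)) *
        AdjoinRoot.root (lensRelation R n c) ^ (i : ℕ) := by
  rw [LensRing.basis, Module.Basis.smulTower_apply, TruncPoly.basis_apply, Algebra.smul_def,
    LensRing.basisOverTrunc, Module.Basis.reindex_apply, PowerBasis.basis_eq_pow]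
  rfl

end

noncomputable section

variable (n : ℕ)

local notation "𝔽₂[τ]" => Polynomial (ZMod 2)

local notation "mk" => Ideal.Quotient.mk (relIdeal7 n)

local notation "Λ" => LensRing 𝔽₂[τ] n Polynomial.X

lemma mk_X1_sq_add_X0_mul_X2 : mk (X 1 ^ 2 + X 0 * X 2) = 0 :=
  Ideal.Quotient.eq_zero_iff_mem.mpr (Ideal.subset_span (by simp))

lemma mk_X2_pow : mk (X 2 ^ n) = 0 :=
  Ideal.Quotient.eq_zero_iff_mem.mpr (Ideal.subset_span (by simp))

lemma algebraMap_quot_X : algebraMap 𝔽₂[τ] (Poly7 ⧸ relIdeal7 n) Polynomial.X = mk (X 0) :=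
  congrArg mk (Polynomial.aeval_X _)

def truncToQuot : TruncPoly 𝔽₂[τ] n →+* Poly7 ⧸ relIdeal7 n :=
  AdjoinRoot.lift (algebraMap _ _) (mk (X 2)) (by simp [← map_pow, mk_X2_pow])

def lensRingToQuot : Λ →+* Poly7 ⧸ relIdeal7 n :=
  AdjoinRoot.lift (truncToQuot n) (mk (X 1)) (by
    rw [lensRelation, Polynomial.eval₂_add, Polynomial.eval₂_X_pow, Polynomial.eval₂_C, map_mul,
      AdjoinRoot.algebraMap_eq, truncToQuot, AdjoinRoot.lift_of, AdjoinRoot.lift_root,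
      algebraMap_quot_X, ← map_pow, ← map_mul, ← map_add, mk_X1_sq_add_X0_mul_X2])

def quotToLensRing : Poly7 ⧸ relIdeal7 n →+* Λ :=
  Ideal.Quotient.lift _ (aeval (R := ZMod 2) ![algebraMap 𝔽₂[τ] Λ Polynomial.X,
    AdjoinRoot.root _, algebraMap (TruncPoly 𝔽₂[τ] n) Λ (AdjoinRoot.root _)]).toRingHom <| by
    suffices relIdeal7 n ≤ RingHom.ker _ from fun _ ha ↦ this ha
    rw [relIdeal7, Ideal.span_le, Set.insert_subset_iff, Set.singleton_subset_iff]
    constructor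
    · simpa using LensRing.root_sq_add (R := 𝔽₂[τ]) (n := n) Polynomial.X
    · simp only [SetLike.mem_coe, RingHom.mem_ker, AlgHom.toRingHom_eq_coe, RingHom.coe_coe,
        map_pow, aeval_X]
      simp [← map_pow, TruncPoly.root_pow]

lemma lensRingToQuot_algebraMap (a : 𝔽₂[τ]) :
    lensRingToQuot n (algebraMap 𝔽₂[τ] Λ a) = algebraMap 𝔽₂[τ] (Poly7 ⧸ relIdeal7 n) a := by
  rw [IsScalarTower.algebraMap_apply 𝔽₂[τ] (TruncPoly 𝔽₂[τ] n) Λ]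
  simp [lensRingToQuot, truncToQuot]

lemma quotToLensRing_algebraMap (a : 𝔽₂[τ]) :
    quotToLensRing n (algebraMap 𝔽₂[τ] (Poly7 ⧸ relIdeal7 n) a) = algebraMap 𝔽₂[τ] Λ a := by
  change aeval _ (Polynomial.aeval (X 0) a) = _
  rw [← Polynomial.aeval_algHom_apply, aeval_X]
  simp [Polynomial.aeval_algebraMap_apply]

lemma quotToLensRing_comp_lensRingToQuot :
    (quotToLensRing n).comp (lensRingToQuot n) = RingHom.id Λ := by
  refine AdjoinRoot.ringHom_ext (AdjoinRoot.ringHom_ext (RingHom.ext fun a ↦ ?_) ?_) ?_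
  · change quotToLensRing n (lensRingToQuot n (algebraMap 𝔽₂[τ] Λ a)) = algebraMap 𝔽₂[τ] Λ a
    rw [lensRingToQuot_algebraMap, quotToLensRing_algebraMap]
  all_goals simp [lensRingToQuot, truncToQuot, quotToLensRing]

lemma lensRingToQuot_comp_quotToLensRing :
    (lensRingToQuot n).comp (quotToLensRing n) = RingHom.id (Poly7 ⧸ relIdeal7 n) := by
  refine Ideal.Quotient.ringHom_ext (MvPolynomial.ringHom_ext' (Subsingleton.elim _ _) ?_)
  intro i
  fin_cases i
  · change lensRingToQuot n (quotToLensRing n (mk (X 0))) = mk (X 0)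
    rw [← algebraMap_quot_X, quotToLensRing_algebraMap, lensRingToQuot_algebraMap]
  all_goals simp [lensRingToQuot, truncToQuot, quotToLensRing]

def lensRingEquivQuot : Λ ≃ₐ[𝔽₂[τ]] Poly7 ⧸ relIdeal7 n :=
  AlgEquiv.ofRingEquiv (f := RingEquiv.ofRingHom (lensRingToQuot n) (quotToLensRing n)
    (lensRingToQuot_comp_quotToLensRing n) (quotToLensRing_comp_lensRingToQuot n))
    (lensRingToQuot_algebraMap n)

lemma lensRingEquivQuot_basis (hn : 0 < n) (j : Fin n) (i : Fin 2) :
    lensRingEquivQuot n (LensRing.basis hn Polynomial.X (j, i)) =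
      mk (X 1 ^ (i : ℕ) * X 2 ^ (j : ℕ)) := by
  simp [lensRingEquivQuot, LensRing.basis_apply, lensRingToQuot, truncToQuot, mul_comm]

end

theorem stmt_7 (n : ℕ) (hn : 1 ≤ n) :
    ∃ b : Module.Basis (Fin n ⊕ Fin n) (Polynomial (ZMod 2)) (Poly7 ⧸ relIdeal7 n),
      (∀ j : Fin n, b (Sum.inl j) = Ideal.Quotient.mk (relIdeal7 n) (X 2 ^ (j : ℕ))) ∧
      (∀ j : Fin n, b (Sum.inr j) = Ideal.Quotient.mk (relIdeal7 n) (X 1 * X 2 ^ (j : ℕ))) := by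
  let σ : Fin n × Fin 2 ≃ Fin n ⊕ Fin n := (Equiv.prodComm _ _).trans
    ((finTwoEquiv.prodCongr (Equiv.refl _)).trans (Equiv.boolProdEquivSum _))
  refine ⟨((LensRing.basis hn Polynomial.X).map (lensRingEquivQuot n).toLinearEquiv).reindex σ,
    fun j ↦ ?_, fun j ↦ ?_⟩
  · simpa [σ, finTwoEquiv] using lensRingEquivQuot_basis n hn j 0
  · simpa [σ, finTwoEquiv] using lensRingEquivQuot_basis n hn j 1
end

section
/- Let A = F₂[ξ₁, ξ₂, ξ₃, ...] be a polynomial algebra over F₂ with ξ₀ := 1, and define an algebra map Δ : A → A ⊗ A by Δ(ξ_n) = ∑_{i=0}^{n} ξ_{n−i}^{2^i} ⊗ ξ_i. Then Δ is coassociative: (Δ ⊗ id) ∘ Δ = (id ⊗ Δ) ∘ Δ. -/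
open scoped TensorProduct

open MvPolynomial

/-- `A = F₂[ξ₁, ξ₂, ξ₃, ...]`, a polynomial algebra over `F₂` on generators indexed by
positive integers. -/
abbrev A9 := MvPolynomial ℕ+ (ZMod 2)

/-- The generators `ξ_n` for `n ≥ 1`, together with the convention `ξ₀ = 1`. -/
noncomputable def xi9 : ℕ → A9 := fun n =>
  if h : n = 0 then 1 else X ⟨n, Nat.pos_of_ne_zero h⟩

/-- The algebra map `Δ : A → A ⊗ A` with `Δ(ξ_n) = ∑_{i=0}^{n} ξ_{n−i}^{2^i} ⊗ ξ_i`. -/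
noncomputable def Delta9 : A9 →ₐ[ZMod 2] A9 ⊗[ZMod 2] A9 :=
  aeval fun p : ℕ+ =>
    ∑ i ∈ Finset.range ((p : ℕ) + 1), (xi9 ((p : ℕ) - i) ^ (2 ^ i)) ⊗ₜ[ZMod 2] xi9 i

/-
Writing `Δ(ξ_n) = ∑_{a+b=n} ξ_a^{2^b} ⊗ ξ_b`, the Frobenius identity `(x + y)^2 = x^2 + y^2`
gives `Δ(ξ_a^{2^b}) = ∑_{c+d=a} ξ_c^{2^{d+b}} ⊗ ξ_d^{2^b}`. Both `(Δ ⊗ id)(Δ ξ_n)` and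
`(id ⊗ Δ)(Δ ξ_n)` therefore equal `∑_{a+b+c=n} ξ_a^{2^{b+c}} ⊗ ξ_b^{2^c} ⊗ ξ_c`, and two algebra
maps out of a polynomial algebra agree once they agree on the generators.
-/

open Finset

theorem Finset.sum_antidiagonal_antidiagonal_assoc {A M : Type*} [AddCommMonoid A]
    [HasAntidiagonal A] [AddCommMonoid M] (n : A) (f : A → A → A → M) :
    ∑ p ∈ antidiagonal n, ∑ q ∈ antidiagonal p.1, f q.1 q.2 p.2 =
      ∑ p ∈ antidiagonal n, ∑ q ∈ antidiagonal p.2, f p.1 q.1 q.2 := by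
  simp only [Finset.sum_sigma']
  apply Finset.sum_nbij' (fun ⟨⟨_, c⟩, ⟨a, b⟩⟩ ↦ ⟨(a, b + c), (b, c)⟩)
    (fun ⟨⟨a, _⟩, ⟨b, c⟩⟩ ↦ ⟨(a + b, c), (a, b)⟩) <;> aesop (add simp [add_assoc])

theorem xi9_coe (p : ℕ+) : xi9 p = X p :=
  dif_neg p.ne_zero

theorem Delta9_xi9 (n : ℕ) :
    Delta9 (xi9 n) = ∑ p ∈ antidiagonal n, (xi9 p.1 ^ 2 ^ p.2) ⊗ₜ[ZMod 2] xi9 p.2 := by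
  rw [← Finset.Nat.sum_antidiagonal_swap]
  simp only [Prod.fst_swap, Prod.snd_swap]
  rw [Finset.Nat.sum_antidiagonal_eq_sum_range_succ (fun b a ↦ (xi9 a ^ 2 ^ b) ⊗ₜ[ZMod 2] xi9 b)]
  rcases Nat.eq_zero_or_pos n with rfl | hn
  · simp [xi9, Algebra.TensorProduct.one_def]
  · lift n to ℕ+ using hn
    rw [xi9_coe, Delta9, aeval_X]

theorem Delta9_xi9_pow (n k : ℕ) :
    Delta9 (xi9 n ^ 2 ^ k) = ∑ p ∈ antidiagonal n,
      (xi9 p.1 ^ 2 ^ (p.2 + k)) ⊗ₜ[ZMod 2] (xi9 p.2 ^ 2 ^ k) := by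
  have : CharP (A9 ⊗[ZMod 2] A9) 2 := charP_of_injective_algebraMap' (ZMod 2) 2
  rw [map_pow, Delta9_xi9, sum_pow_char_pow]
  simp only [Algebra.TensorProduct.tmul_pow, ← pow_mul, ← pow_add]

/-- `Δ` is coassociative: `(Δ ⊗ id) ∘ Δ = (id ⊗ Δ) ∘ Δ`. -/
theorem stmt_9 :
    (Algebra.TensorProduct.assoc (ZMod 2) (ZMod 2) (ZMod 2) A9 A9 A9).toAlgHom.comp
        ((Algebra.TensorProduct.map Delta9 (AlgHom.id (ZMod 2) A9)).comp Delta9) =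
      (Algebra.TensorProduct.map (AlgHom.id (ZMod 2) A9) Delta9).comp Delta9 := by
  ext p
  simp only [AlgHom.comp_apply, AlgEquiv.coe_toAlgHom, ← xi9_coe, Delta9_xi9,
    map_sum, Algebra.TensorProduct.map_tmul, AlgHom.coe_id, id_eq, Delta9_xi9_pow,
    TensorProduct.sum_tmul, TensorProduct.tmul_sum, Algebra.TensorProduct.assoc_tmul]
  rw [Finset.sum_antidiagonal_antidiagonal_assoc _
    fun a b c ↦ (xi9 a ^ 2 ^ (b + c)) ⊗ₜ[ZMod 2] ((xi9 b ^ 2 ^ c) ⊗ₜ[ZMod 2] xi9 c)]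
  refine Finset.sum_congr rfl fun q _ ↦ Finset.sum_congr rfl fun r hr ↦ ?_
  rw [HasAntidiagonal.mem_antidiagonal.mp hr]
end

section
/- Let A = F₂[ξ₁, ξ₂, ...] ⊗ E(τ₀, τ₁, ...) with ξ₀ := 1, and define an algebra map Δ : A → A ⊗ A by Δ(ξ_n) = ∑_{i=0}^{n} ξ_{n−i}^{2^i} ⊗ ξ_i and Δ(τ_n) = τ_n ⊗ 1 + ∑_{i=0}^{n} ξ_{n−i}^{2^i} ⊗ τ_i. Then Δ is coassociative. -/
open scoped TensorProduct

open MvPolynomial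

/-- The polynomial ring `F₂[ξ₁, ξ₂, ... ; τ₀, τ₁, ...]`:
`Sum.inl n` indexes `ξ_n` (`n ≥ 1`) and `Sum.inr i` indexes `τ_i`. -/
abbrev P10 := MvPolynomial (ℕ+ ⊕ ℕ) (ZMod 2)

/-- The ideal `(τ_i² : i ∈ ℕ)`, imposing the exterior-algebra relations on the `τ_i`. -/
noncomputable def relIdeal10 : Ideal P10 :=
  Ideal.span (Set.range fun i : ℕ => (X (Sum.inr i) : P10) ^ 2)

/-- `A = F₂[ξ₁, ξ₂, ...] ⊗ E(τ₀, τ₁, ...)`. -/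
abbrev A10 := P10 ⧸ relIdeal10

/-- The generators `ξ_n` for `n ≥ 1`, with the convention `ξ₀ = 1`. -/
noncomputable def xi10 : ℕ → A10 := fun n =>
  if h : n = 0 then 1 else Ideal.Quotient.mk relIdeal10 (X (Sum.inl ⟨n, Nat.pos_of_ne_zero h⟩))

/-- The exterior generators `τ_i`. -/
noncomputable def tau10 : ℕ → A10 := fun i => Ideal.Quotient.mk relIdeal10 (X (Sum.inr i))

/-!
Both sides of coassociativity are algebra maps, so it suffices to compare them on the
generators `ξ_n`, `τ_n`. Since we are in characteristic 2, `Δ(ξ_m ^ 2 ^ i)` is obtained from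
`Δ ξ_m` by raising every tensor factor to the power `2 ^ i`, so that
`(Δ ⊗ 1) Δ ξ_n = ∑_{i + j ≤ n} ξ_{n-i-j} ^ 2 ^ (i+j) ⊗ ξ_j ^ 2 ^ i ⊗ ξ_i`; putting `k = i + j`
this is `∑_{k ≤ n} ξ_{n-k} ^ 2 ^ k ⊗ Δ ξ_k = (1 ⊗ Δ) Δ ξ_n`. The same reindexing handles `τ_n`.
-/

open Finset Algebra.TensorProduct

lemma sum_pow_two_pow {R ι : Type*} [CommRing R] [Algebra (ZMod 2) R] (s : Finset ι)
    (f : ι → R) (i : ℕ) : (∑ x ∈ s, f x) ^ 2 ^ i = ∑ x ∈ s, f x ^ 2 ^ i := by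
  -- `CharP R 2` fails for the zero ring
  rcases subsingleton_or_nontrivial R with _ | _
  · exact Subsingleton.elim _ _
  · have : CharP R 2 := charP_of_injective_algebraMap (algebraMap (ZMod 2) R).injective 2
    exact sum_pow_char_pow 2 i s f

lemma sum_range_succ_diag_flip {M : Type*} [AddCommMonoid M] (n : ℕ) (f : ℕ → ℕ → M) :
    ∑ m ∈ range (n + 1), ∑ k ∈ range (n - m + 1), f m k =
      ∑ m ∈ range (n + 1), ∑ k ∈ range (m + 1), f k (m - k) := by
  rw [sum_range_diag_flip]
  refine sum_congr rfl fun m hm => ?_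
  rw [Nat.sub_add_comm (Nat.lt_succ_iff.mp (mem_range.mp hm))]

lemma xi10_coe_pnat (n : ℕ+) : xi10 n = Ideal.Quotient.mk relIdeal10 (X (Sum.inl n)) :=
  dif_neg n.ne_zero

lemma A10.algHom_ext {B : Type*} [Semiring B] [Algebra (ZMod 2) B] {f g : A10 →ₐ[ZMod 2] B}
    (hξ : ∀ n : ℕ+, f (xi10 n) = g (xi10 n)) (hτ : ∀ i, f (tau10 i) = g (tau10 i)) :
    f = g := by
  refine Ideal.Quotient.algHom_ext _ (MvPolynomial.algHom_ext ?_)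
  rintro (n | i)
  · simpa [xi10_coe_pnat] using hξ n
  · exact hτ i

section Coassociativity

variable {Δ : A10 →ₐ[ZMod 2] A10 ⊗[ZMod 2] A10}
  (hξ : ∀ n : ℕ, Δ (xi10 n) =
    ∑ i ∈ range (n + 1), (xi10 (n - i) ^ (2 ^ i)) ⊗ₜ[ZMod 2] xi10 i)
include hξ

lemma map_xi10_pow_two_pow (m i : ℕ) :
    Δ (xi10 m ^ 2 ^ i) =
      ∑ j ∈ range (m + 1), (xi10 (m - j) ^ 2 ^ (j + i)) ⊗ₜ[ZMod 2] (xi10 j ^ 2 ^ i) := by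
  calc Δ (xi10 m ^ 2 ^ i) = Δ (xi10 m) ^ 2 ^ i := Δ.map_pow _ _
    _ = _ := by
      rw [hξ, sum_pow_two_pow (R := A10 ⊗[ZMod 2] A10)]
      simp only [tmul_pow, ← pow_mul, ← pow_add]

lemma assoc_sum_map_xi10_pow_tmul (n : ℕ) (c : ℕ → A10) :
    ∑ i ∈ range (n + 1), Algebra.TensorProduct.assoc (ZMod 2) (ZMod 2) (ZMod 2) A10 A10 A10
        (Δ (xi10 (n - i) ^ 2 ^ i) ⊗ₜ[ZMod 2] c i) =
      ∑ k ∈ range (n + 1), (xi10 (n - k) ^ 2 ^ k) ⊗ₜ[ZMod 2]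
        ∑ i ∈ range (k + 1), (xi10 (k - i) ^ 2 ^ i) ⊗ₜ[ZMod 2] c i := by
  simp only [map_xi10_pow_two_pow hξ, TensorProduct.sum_tmul, TensorProduct.tmul_sum, map_sum,
    assoc_tmul]
  rw [sum_range_succ_diag_flip]
  refine sum_congr rfl fun k hk => sum_congr rfl fun i hi => ?_
  simp only [mem_range] at hk hi
  rw [Nat.sub_add_cancel (by omega), Nat.sub_sub_sub_cancel_right (by omega)]

lemma coassoc_xi10 (n : ℕ) :
    Algebra.TensorProduct.assoc (ZMod 2) (ZMod 2) (ZMod 2) A10 A10 A10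
        (Algebra.TensorProduct.map Δ (AlgHom.id (ZMod 2) A10) (Δ (xi10 n))) =
      Algebra.TensorProduct.map (AlgHom.id (ZMod 2) A10) Δ (Δ (xi10 n)) := by
  rw [hξ n, map_sum, map_sum, map_sum]
  simp only [map_tmul, AlgHom.coe_id, id_eq]
  rw [assoc_sum_map_xi10_pow_tmul hξ]
  exact sum_congr rfl fun k _ => by rw [hξ]

lemma coassoc_tau10 (hτ : ∀ n : ℕ, Δ (tau10 n) =
      tau10 n ⊗ₜ[ZMod 2] 1 +
        ∑ i ∈ range (n + 1), (xi10 (n - i) ^ (2 ^ i)) ⊗ₜ[ZMod 2] tau10 i) (n : ℕ) :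
    Algebra.TensorProduct.assoc (ZMod 2) (ZMod 2) (ZMod 2) A10 A10 A10
        (Algebra.TensorProduct.map Δ (AlgHom.id (ZMod 2) A10) (Δ (tau10 n))) =
      Algebra.TensorProduct.map (AlgHom.id (ZMod 2) A10) Δ (Δ (tau10 n)) := by
  rw [hτ n, map_add, map_add, map_add, map_sum, map_sum, map_sum]
  simp only [map_tmul, AlgHom.coe_id, id_eq]
  have hΔ1 : Δ 1 = 1 := Δ.map_one
  rw [assoc_sum_map_xi10_pow_tmul hξ, hΔ1]
  simp only [hτ, Algebra.TensorProduct.one_def, TensorProduct.add_tmul, TensorProduct.tmul_add,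
    TensorProduct.sum_tmul, map_add, map_sum, assoc_tmul, sum_add_distrib, add_assoc]

end Coassociativity

/-- The algebra map `Δ : A → A ⊗ A` defined by `Δ(ξ_n) = ∑_{i=0}^{n} ξ_{n−i}^{2^i} ⊗ ξ_i` and
`Δ(τ_n) = τ_n ⊗ 1 + ∑_{i=0}^{n} ξ_{n−i}^{2^i} ⊗ τ_i` is coassociative. -/
theorem stmt_10 (Δ : A10 →ₐ[ZMod 2] A10 ⊗[ZMod 2] A10)
    (hξ : ∀ n : ℕ, Δ (xi10 n) =
      ∑ i ∈ Finset.range (n + 1), (xi10 (n - i) ^ (2 ^ i)) ⊗ₜ[ZMod 2] xi10 i)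
    (hτ : ∀ n : ℕ, Δ (tau10 n) =
      tau10 n ⊗ₜ[ZMod 2] 1 +
        ∑ i ∈ Finset.range (n + 1), (xi10 (n - i) ^ (2 ^ i)) ⊗ₜ[ZMod 2] tau10 i) :
    (Algebra.TensorProduct.assoc (ZMod 2) (ZMod 2) (ZMod 2) A10 A10 A10).toAlgHom.comp
        ((Algebra.TensorProduct.map Δ (AlgHom.id (ZMod 2) A10)).comp Δ) =
      (Algebra.TensorProduct.map (AlgHom.id (ZMod 2) A10) Δ).comp Δ :=
  A10.algHom_ext (fun n => coassoc_xi10 hξ n) (coassoc_tau10 hξ hτ)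
end

section
/- Let S = F₂[η, ν, α, β]/(ην, ν³, να, α² − η²β). Then for every k ≥ 0, the elements β^k and α·β^k are nonzero in S, and neither lies in the ideal generated by η. -/
/-!
Send `η, ν ↦ 0`, `α ↦ ε`, `β ↦ X` into the polynomial ring over the dual numbers `F₂[ε]/(ε²)`.
All four relations die there (`α² - η²β ↦ ε² = 0`), so this is a ring map out of `S` killing `η`,
and it sends `β^k` and `αβ^k` to the nonzero `X^k` and `εX^k`. Hence neither lies in `(η)`,
and in particular neither is zero.
-/

open MvPolynomial

/-- The ideal `(ην, ν³, να, α² - η²β)` in `F₂[η, ν, α, β]`,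
where `η = X 0`, `ν = X 1`, `α = X 2`, `β = X 3`. -/
noncomputable def relIdeal13 : Ideal (MvPolynomial (Fin 4) (ZMod 2)) :=
  Ideal.span {X 0 * X 1, X 1 ^ 3, X 1 * X 2, X 2 ^ 2 - X 0 ^ 2 * X 3}

theorem Ideal.notMem_span_singleton_of_map_eq_zero {R T : Type*} [CommSemiring R] [Semiring T]
    (f : R →+* T) {x y : R} (hx : f x = 0) (hy : f y ≠ 0) : y ∉ Ideal.span {x} := by
  rw [Ideal.mem_span_singleton']
  rintro ⟨c, rfl⟩
  exact hy (by rw [map_mul, hx, mul_zero])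

noncomputable def evalDualPoly :
    MvPolynomial (Fin 4) (ZMod 2) →ₐ[ZMod 2] Polynomial (DualNumber (ZMod 2)) :=
  aeval ![0, 0, Polynomial.C (DualNumber.eps : DualNumber (ZMod 2)), Polynomial.X]

theorem relIdeal13_le_ker_evalDualPoly : relIdeal13 ≤ RingHom.ker evalDualPoly := by
  rw [relIdeal13, Ideal.span_le]
  rintro p (rfl | rfl | rfl | rfl) <;> simp [evalDualPoly, sq, ← Polynomial.C_mul]

noncomputable def liftEvalDualPoly :
    MvPolynomial (Fin 4) (ZMod 2) ⧸ relIdeal13 →+* Polynomial (DualNumber (ZMod 2)) :=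
  Ideal.Quotient.lift relIdeal13 evalDualPoly fun _ hp => relIdeal13_le_ker_evalDualPoly hp

theorem stmt_13 (k : ℕ) :
    Ideal.Quotient.mk relIdeal13 (X 3) ^ k ≠ 0 ∧
    Ideal.Quotient.mk relIdeal13 (X 2) * Ideal.Quotient.mk relIdeal13 (X 3) ^ k ≠ 0 ∧
    Ideal.Quotient.mk relIdeal13 (X 3) ^ k ∉
      Ideal.span {Ideal.Quotient.mk relIdeal13 (X 0)} ∧
    Ideal.Quotient.mk relIdeal13 (X 2) * Ideal.Quotient.mk relIdeal13 (X 3) ^ k ∉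
      Ideal.span {Ideal.Quotient.mk relIdeal13 (X 0)} := by
  have hε : (DualNumber.eps : DualNumber (ZMod 2)) ≠ 0 := fun h => by
    simpa using congrArg TrivSqZeroExt.snd h
  have hβ : Ideal.Quotient.mk relIdeal13 (X 3) ^ k ∉
      Ideal.span {Ideal.Quotient.mk relIdeal13 (X 0)} :=
    Ideal.notMem_span_singleton_of_map_eq_zero liftEvalDualPoly
      (by simp [liftEvalDualPoly, evalDualPoly])
      (by simpa [liftEvalDualPoly, evalDualPoly] using (Polynomial.monic_X_pow k).ne_zero)
  have hαβ : Ideal.Quotient.mk relIdeal13 (X 2) * Ideal.Quotient.mk relIdeal13 (X 3) ^ k ∉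
      Ideal.span {Ideal.Quotient.mk relIdeal13 (X 0)} :=
    Ideal.notMem_span_singleton_of_map_eq_zero liftEvalDualPoly
      (by simp [liftEvalDualPoly, evalDualPoly])
      (by simpa [liftEvalDualPoly, evalDualPoly, Polynomial.C_mul_X_pow_eq_monomial] using hε)
  exact ⟨fun h => hβ (h ▸ zero_mem _), fun h => hαβ (h ▸ zero_mem _), hβ, hαβ⟩
end
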